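/- Let V be a finite-dimensional real vector space, h ≥ 1, and consider on W = (V × ℝʰ) ⊕ (V* × ℝʰ) the endomorphism Φ built from the block data A = (F,0;0,0), ♯_π = (♯_P, −ᵗZ; Z, 0), ♭_σ = (♭_θ, −ᵗξ; ξ, 0), where F ∈ End(V), P a skew bivector, θ a skew 2-form, Z = (Zₐ) h vectors in V, ξ = (ξᵃ) h covectors. Then Φ² = −Id if and only if: P(α∘F,β)=P(α,β∘F); θ(FX,Y)=θ(X,FY); F(Zₐ)=0; ξᵃ∘F=0; i(Zₐ)θ=0; i(ξᵃ)P=0; ξᵃ(Z_b)=δᵃ_b; and F² = −Id − ♯_P∘♭_θ + Σₐ ξᵃ ⊗ Zₐ. -/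

import Mathlib

open scoped BigOperators

/-- The endomorphism `Φ` of the stable big space `(V × ℝʰ) ⊕ (V* × ℝʰ)` built
from the strictly classical block data
`A = (F,0;0,0)`, `♯_π = (♯_P, −ᵗZ; Z, 0)`, `♭_σ = (♭_θ, −ᵗξ; ξ, 0)`:
`Φ((X,u)⊕(α,v)) = (A(X,u) + ♯_π(α,v)) ⊕ (♭_σ(X,u) − ᵗA(α,v))`. -/
noncomputable def PhiGAC {V : Type*} [AddCommGroup V] [Module ℝ V] {h : ℕ}
    (F : V →ₗ[ℝ] V) (sP : Module.Dual ℝ V →ₗ[ℝ] V)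
    (bθ : V →ₗ[ℝ] Module.Dual ℝ V) (Z : Fin h → V)
    (ξ : Fin h → Module.Dual ℝ V)
    (p : (V × (Fin h → ℝ)) × (Module.Dual ℝ V × (Fin h → ℝ))) :
    (V × (Fin h → ℝ)) × (Module.Dual ℝ V × (Fin h → ℝ)) :=
  ((F p.1.1 + sP p.2.1 - ∑ a, p.2.2 a • Z a, fun a => p.2.1 (Z a)),
   (bθ p.1.1 - ∑ a, p.1.2 a • ξ a - F.dualMap p.2.1, fun a => ξ a p.1.1))

/-!
`PhiGAC` is additive, so `Φ² = -Id` may be tested separately on the four summands `V`, `ℝʰ`,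
`V*`, `ℝʰ`; on each of them the components of `Φ² + Id` are the listed conditions, up to the
skew-symmetry of `P` and `θ`. The one genuinely new identity, coming from the summand `V*`, is the
transpose `ᵗF² = -Id - ♭_θ ∘ ♯_P + Σₐ Zₐ ⊗ ξᵃ` of the formula for `F²`; by skew-symmetry and
since covectors separate points it is equivalent to that formula.
-/

theorem forall_sum_smul_eq_zero_iff {ι R M : Type*} [Fintype ι] [DecidableEq ι] [Semiring R]
    [AddCommMonoid M] [Module R M] (x : ι → M) :
    (∀ u : ι → R, ∑ a, u a • x a = 0) ↔ ∀ a, x a = 0 := by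
  refine ⟨fun hx a => ?_, fun hx u => by simp [hx]⟩
  simpa [Pi.single_apply] using hx (Pi.single a 1)

theorem forall_sum_mul_eq_self_iff {ι R : Type*} [Fintype ι] [DecidableEq ι] [Semiring R]
    (c : ι → ι → R) :
    (∀ u : ι → R, ∀ b, ∑ a, u a * c a b = u b) ↔ ∀ a b, c a b = if a = b then 1 else 0 := by
  refine ⟨fun hc a b => ?_, fun hc u b => by simp [hc]⟩
  simpa [Pi.single_apply, eq_comm] using hc (Pi.single a 1) b

theorem forall_eq_neg_iff_of_map_add {M₁ M₂ M₃ M₄ : Type*} [AddCommGroup M₁] [AddCommGroup M₂]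
    [AddCommGroup M₃] [AddCommGroup M₄] (g : (M₁ × M₂) × (M₃ × M₄) → (M₁ × M₂) × (M₃ × M₄))
    (hg : ∀ p q, g (p + q) = g p + g q) :
    (∀ p, g p = -p) ↔ (∀ x, g ((x, 0), (0, 0)) = -((x, 0), (0, 0))) ∧
      (∀ u, g ((0, u), (0, 0)) = -((0, u), (0, 0))) ∧
      (∀ α, g ((0, 0), (α, 0)) = -((0, 0), (α, 0))) ∧
      (∀ v, g ((0, 0), (0, v)) = -((0, 0), (0, v))) := by
  refine ⟨fun hg' => ⟨fun _ => hg' _, fun _ => hg' _, fun _ => hg' _, fun _ => hg' _⟩, ?_⟩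
  rintro ⟨hx, hu, hα, hv⟩ ⟨⟨x, u⟩, α, v⟩
  have hp : (((x, u), (α, v)) : (M₁ × M₂) × (M₃ × M₄)) =
      ((x, 0), (0, 0)) + ((0, u), (0, 0)) + ((0, 0), (α, 0)) + ((0, 0), (0, v)) := by simp
  rw [hp, hg, hg, hg, hx, hu, hα, hv, neg_add, neg_add, neg_add]

section PhiGAC
variable {V : Type*} [AddCommGroup V] [Module ℝ V] {h : ℕ}
    (F : V →ₗ[ℝ] V) (sP : Module.Dual ℝ V →ₗ[ℝ] V)
    (bθ : V →ₗ[ℝ] Module.Dual ℝ V) (Z : Fin h → V) (ξ : Fin h → Module.Dual ℝ V)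

local notation "Φ" => PhiGAC F sP bθ Z ξ

theorem PhiGAC_add (p q) : Φ (p + q) = Φ p + Φ q := by
  simp only [PhiGAC, Prod.fst_add, Prod.snd_add, map_add, Pi.add_apply, add_smul,
    Finset.sum_add_distrib, LinearMap.add_apply, Prod.mk_add_mk]
  congr 2 <;> abel

theorem dualMap_sq_eq_iff (hP : ∀ α β : Module.Dual ℝ V, β (sP α) = -α (sP β))
    (hθ : ∀ X Y : V, bθ X Y = -bθ Y X) :
    (∀ α, bθ (sP α) - ∑ a, α (Z a) • ξ a + F.dualMap (F.dualMap α) = -α) ↔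
      ∀ X, F (F X) = -X - sP (bθ X) + ∑ a, ξ a X • Z a := by
  have htranspose : ∀ α X, bθ (sP α) X = α (sP (bθ X)) := fun α X => by
    rw [hθ, hP, neg_neg]
  simp only [LinearMap.ext_iff, ← sub_eq_zero (a := F (F _)),
    ← Module.forall_dual_apply_eq_zero_iff ℝ (F (F _) - _)]
  rw [forall_comm]
  refine forall_congr' fun α => forall_congr' fun X => ?_
  simp only [LinearMap.add_apply, LinearMap.sub_apply, htranspose, LinearMap.coe_sum,
    LinearMap.coe_smul, Finset.sum_apply, Pi.smul_apply, smul_eq_mul, LinearMap.dualMap_apply,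
    LinearMap.neg_apply, map_sub, map_add, map_neg, map_sum, map_smul, mul_comm]
  constructor <;> intro hαX <;> linarith

theorem PhiGAC_sq_eq_neg_on_vectors_iff (hθ : ∀ X Y : V, bθ X Y = -bθ Y X) :
    (∀ X, Φ (Φ ((X, 0), (0, 0))) = -((X, 0), (0, 0))) ↔
      (∀ X, F (F X) = -X - sP (bθ X) + ∑ a, ξ a X • Z a) ∧ (∀ a, bθ (Z a) = 0) ∧
      (∀ X Y, bθ (F X) Y = bθ X (F Y)) ∧ (∀ a X, ξ a (F X) = 0) := by
  have hF2 : ∀ X, F (F X) + sP (bθ X) - ∑ a, ξ a X • Z a = -X ↔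
      F (F X) = -X - sP (bθ X) + ∑ a, ξ a X • Z a := fun X => by
    constructor <;> intro hX <;> rw [← sub_eq_zero] at hX ⊢ <;> rw [← hX] <;> abel
  have hZ : (∀ X a, bθ X (Z a) = 0) ↔ ∀ a, bθ (Z a) = 0 := by
    simp only [hθ _ (Z _), neg_eq_zero, LinearMap.ext_iff, LinearMap.zero_apply]
    exact forall_comm
  simp only [PhiGAC, map_zero, add_zero, Pi.zero_apply, zero_smul, Finset.sum_const_zero,
    sub_zero, LinearMap.zero_apply, Prod.neg_mk, neg_zero, Prod.mk.injEq, funext_iff, forall_and,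
    hF2, hZ, sub_eq_zero, LinearMap.ext_iff, LinearMap.dualMap_apply]
  rw [forall_comm (α := V) (β := Fin h)]
  tauto

theorem PhiGAC_sq_eq_neg_on_scalars_iff :
    (∀ u, Φ (Φ ((0, u), (0, 0))) = -((0, u), (0, 0))) ↔
      (∀ a, sP (ξ a) = 0) ∧ (∀ a b, ξ a (Z b) = if a = b then 1 else 0) ∧
      (∀ a X, ξ a (F X) = 0) := by
  simp only [PhiGAC, map_zero, add_zero, Pi.zero_apply, zero_smul, Finset.sum_const_zero, sub_self,
    LinearMap.zero_apply, zero_sub, sub_zero, map_neg, map_sum, map_smul, zero_add,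
    LinearMap.neg_apply, LinearMap.coe_sum, LinearMap.coe_smul, Finset.sum_apply, Pi.smul_apply,
    smul_eq_mul, sub_neg_eq_add, Prod.neg_mk, neg_zero, Prod.mk.injEq, neg_eq_zero, funext_iff,
    Pi.neg_apply, neg_inj, implies_true, and_true, forall_and]
  rw [forall_sum_smul_eq_zero_iff, forall_sum_mul_eq_self_iff, forall_sum_smul_eq_zero_iff]
  simp only [LinearMap.ext_iff, LinearMap.dualMap_apply, LinearMap.zero_apply, and_assoc]

theorem PhiGAC_sq_eq_neg_on_covectors_iff (hP : ∀ α β : Module.Dual ℝ V, β (sP α) = -α (sP β))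
    (hθ : ∀ X Y : V, bθ X Y = -bθ Y X) :
    (∀ α, Φ (Φ ((0, 0), (α, 0))) = -((0, 0), (α, 0))) ↔
      (∀ α β : Module.Dual ℝ V, β (sP (F.dualMap α)) = (F.dualMap β) (sP α)) ∧
      (∀ a, F (Z a) = 0) ∧ (∀ X, F (F X) = -X - sP (bθ X) + ∑ a, ξ a X • Z a) ∧
      (∀ a, sP (ξ a) = 0) := by
  have hcomm : (∀ α, F (sP α) + -sP (F.dualMap α) = 0) ↔
      ∀ α β : Module.Dual ℝ V, β (sP (F.dualMap α)) = (F.dualMap β) (sP α) := by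
    refine forall_congr' fun α => ?_
    rw [← Module.forall_dual_apply_eq_zero_iff ℝ]
    simp only [map_add, map_neg, add_neg_eq_zero, LinearMap.dualMap_apply]
    exact forall_congr' fun _ => eq_comm
  have hZ : (∀ α : Module.Dual ℝ V, ∀ a, α (F (Z a)) = 0) ↔ ∀ a, F (Z a) = 0 := by
    simp only [← Module.forall_dual_apply_eq_zero_iff ℝ (F _)]
    exact forall_comm
  have hξ : (∀ α : Module.Dual ℝ V, ∀ a, ξ a (sP α) = 0) ↔ ∀ a, sP (ξ a) = 0 := by
    simp only [hP _ (ξ _), neg_eq_zero, ← Module.forall_dual_apply_eq_zero_iff ℝ (sP _)]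
    exact forall_comm
  simp only [PhiGAC, map_zero, zero_add, Pi.zero_apply, zero_smul, Finset.sum_const_zero, sub_zero,
    sub_self, zero_sub, map_neg, LinearMap.neg_apply, LinearMap.dualMap_apply, sub_neg_eq_add,
    Prod.neg_mk, neg_zero, Prod.mk.injEq, funext_iff, neg_eq_zero, forall_and]
  rw [hcomm, hZ, hξ, dualMap_sq_eq_iff F sP bθ Z ξ hP hθ]
  tauto

theorem PhiGAC_sq_eq_neg_on_coscalars_iff :
    (∀ v, Φ (Φ ((0, 0), (0, v))) = -((0, 0), (0, v))) ↔
      (∀ a, F (Z a) = 0) ∧ (∀ a, bθ (Z a) = 0) ∧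
      (∀ a b, ξ a (Z b) = if a = b then 1 else 0) := by
  simp only [PhiGAC, map_zero, add_zero, zero_sub, LinearMap.zero_apply, Pi.zero_apply, zero_smul,
    Finset.sum_const_zero, sub_self, map_neg, map_sum, map_smul, sub_zero, smul_eq_mul,
    Prod.neg_mk, neg_zero, Prod.mk.injEq, neg_eq_zero, funext_iff, implies_true, and_true,
    Pi.neg_apply, neg_inj, forall_and]
  rw [forall_sum_smul_eq_zero_iff, forall_sum_smul_eq_zero_iff,
    forall_sum_mul_eq_self_iff fun a b => ξ b (Z a), forall_comm]
  simp only [eq_comm (a := (_ : Fin h))]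
end PhiGAC

theorem stmt11 (V : Type*) [AddCommGroup V] [Module ℝ V] (h : ℕ)
    (F : V →ₗ[ℝ] V) (sP : Module.Dual ℝ V →ₗ[ℝ] V)
    (hP : ∀ α β : Module.Dual ℝ V, β (sP α) = -α (sP β))
    (bθ : V →ₗ[ℝ] Module.Dual ℝ V) (hθ : ∀ X Y : V, bθ X Y = -bθ Y X)
    (Z : Fin h → V) (ξ : Fin h → Module.Dual ℝ V) :
    (∀ p, PhiGAC F sP bθ Z ξ (PhiGAC F sP bθ Z ξ p) = -p) ↔
      ((∀ α β : Module.Dual ℝ V, β (sP (F.dualMap α)) = (F.dualMap β) (sP α)) ∧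
       (∀ X Y : V, bθ (F X) Y = bθ X (F Y)) ∧
       (∀ a, F (Z a) = 0) ∧
       (∀ a, ∀ X : V, ξ a (F X) = 0) ∧
       (∀ a, bθ (Z a) = 0) ∧
       (∀ a, sP (ξ a) = 0) ∧
       (∀ a b, ξ a (Z b) = if a = b then (1 : ℝ) else 0) ∧
       (∀ X : V, F (F X) = -X - sP (bθ X) + ∑ a, ξ a X • Z a)) := by
  rw [forall_eq_neg_iff_of_map_add _ fun p q => by rw [PhiGAC_add, PhiGAC_add],
    PhiGAC_sq_eq_neg_on_vectors_iff F sP bθ Z ξ hθ, PhiGAC_sq_eq_neg_on_scalars_iff,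
    PhiGAC_sq_eq_neg_on_covectors_iff F sP bθ Z ξ hP hθ, PhiGAC_sq_eq_neg_on_coscalars_iff]
  tauto
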